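/- Assume r ≥ 3. The map c_2 : F_q → F_2^{q/2−1} sending a to (tr(a·γ_1^{-1}), ..., tr(a·γ_{q/2−1}^{-1})) is an injective F_2-linear (additive) map, and its image is exactly the dual code C_2^⊥ = {w ∈ F_2^{q/2−1} : Σ_l w_l·u_l = 0 in F_2 for all u ∈ C_2}. In particular C_2^⊥ has exactly q elements. -/
import Mathlib


open Finset

/-- The trace map `tr : F_q → F_2 ⊆ F_q`, `tr x = x + x² + ⋯ + x^(2^(r-1))`. -/
def trF {F : Type*} [Field F] (r : ℕ) (x : F) : F :=
  ∑ i ∈ Finset.range r, x ^ (2 ^ i)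

/-- The trace map with values in `F_2 = ZMod 2` (the value of `trF` is always `0` or `1`). -/
def tr2 {F : Type*} [Field F] [DecidableEq F] (r : ℕ) (x : F) : ZMod 2 :=
  if trF r x = 0 then 0 else 1

/-- The binary linear code `C = {u ∈ F_2^n : ∑_l u_l·v_l = 0 in F_q}`, where `u_l ∈ F_2`
acts on `F_q` through the inclusion `F_2 ⊆ F_q`. -/
def codeSet {F : Type*} [Field F] {n : ℕ} (v : Fin n → F) : Set (Fin n → ZMod 2) :=
  {u | ∑ l, (u l).val • v l = 0}

/-- The dual code `C^⊥ = {w ∈ F_2^n : ∑_l w_l·u_l = 0 in F_2 for all u ∈ C}`. -/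
def dualSet {F : Type*} [Field F] {n : ℕ} (v : Fin n → F) : Set (Fin n → ZMod 2) :=
  {w | ∀ u ∈ codeSet v, ∑ l, w l * u l = 0}

/-- The vector `(g_1⁻¹, …, g_m⁻¹) ∈ F_q^m`. -/
def invVec {F : Type*} [Field F] {m : ℕ} (g : Fin m → F) : Fin m → F :=
  fun l => (g l)⁻¹

/-- The codeword map `a ↦ (tr(a·v_1), …, tr(a·v_n)) ∈ F_2^n`. -/
def cw {F : Type*} [Field F] [DecidableEq F] (r : ℕ) {n : ℕ} (v : Fin n → F) (a : F) :
    Fin n → ZMod 2 :=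
  fun l => tr2 r (a * v l)

set_option linter.unusedSectionVars false
section aux
variable {F : Type*} [Field F]

theorem charF_two [Fintype F] {r : ℕ} (hF : Fintype.card F = 2 ^ r) : CharP F 2 := by
  haveI := ringChar.charP F
  obtain ⟨n, hp, hcard⟩ := FiniteField.card F (ringChar F)
  have hdvd : ringChar F ∣ 2 := by
    apply hp.dvd_of_dvd_pow (n := r)
    rw [← hF, hcard]
    exact dvd_pow_self _ n.2.ne'
  have : ringChar F = 2 := (Nat.prime_dvd_prime_iff_eq hp Nat.prime_two).mp hdvd
  exact this ▸ ringChar.charP F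

variable [CharP F 2] (r : ℕ)

theorem trF_add (x y : F) : trF r (x + y) = trF r x + trF r y := by
  unfold trF
  rw [← Finset.sum_add_distrib]
  exact Finset.sum_congr rfl fun i _ => add_pow_char_pow x y 2 i

theorem trF_sq (x : F) : trF r (x ^ 2) = (trF r x) ^ 2 := by
  unfold trF
  rw [sum_pow_char]
  apply Finset.sum_congr rfl fun i _ => ?_
  rw [← pow_mul, ← pow_mul, mul_comm]

theorem trF_self [Fintype F] (hF : Fintype.card F = 2 ^ r) (x : F) :
    (trF r x) ^ 2 = trF r x := by
  rw [← trF_sq]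
  have key : ∀ y : F, y ^ (2 ^ r) = y := by
    intro y; rw [← hF]; exact FiniteField.pow_card y
  have h1 : trF r (x ^ 2) + x = trF r x + x ^ (2 ^ r) := by
    unfold trF
    have : ∀ i, (x ^ 2) ^ (2 ^ i) = x ^ (2 ^ (i + 1)) := by
      intro i; rw [← pow_mul, pow_succ, mul_comm 2 (2^i)]
    rw [Finset.sum_congr rfl fun i _ => this i]
    have e1 : ∑ i ∈ Finset.range r, x ^ 2 ^ (i+1) + x ^ 2 ^ 0 = ∑ i ∈ Finset.range (r+1), x ^ 2 ^ i := by
      rw [Finset.sum_range_succ']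
    have e2 : ∑ i ∈ Finset.range (r+1), x ^ 2 ^ i = ∑ i ∈ Finset.range r, x ^ 2 ^ i + x ^ 2 ^ r := by
      rw [Finset.sum_range_succ]
    rw [pow_zero, pow_one] at e1
    rw [e1, e2]
  rw [key x] at h1
  exact add_right_cancel h1

theorem trF_zero : trF r (0 : F) = 0 := by
  unfold trF
  apply Finset.sum_eq_zero
  intro i _
  exact zero_pow (by positivity)

theorem trF_mem [Fintype F] (hF : Fintype.card F = 2 ^ r) (x : F) :
    trF r x = 0 ∨ trF r x = 1 := by
  have h := trF_self r hF x
  have : trF r x * (trF r x - 1) = 0 := by ring_nf; rw [pow_two] at h ⊢; linear_combination h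
  rcases mul_eq_zero.mp this with h | h
  · exact Or.inl h
  · exact Or.inr (by linear_combination h)

end aux

section aux2
variable {F : Type*} [Field F] [Fintype F] [DecidableEq F] [CharP F 2] (r : ℕ)

theorem tr2_zero : tr2 r (0 : F) = 0 := by
  unfold tr2; rw [if_pos (trF_zero r)]

theorem trF_of_tr2 {x : F} (h : tr2 r x = 0) : trF r x = 0 := by
  unfold tr2 at h
  split_ifs at h with h'
  · exact h'
  · exact absurd h (by decide)

theorem tr2_add (hF : Fintype.card F = 2 ^ r) (x y : F) :
    tr2 r (x + y) = tr2 r x + tr2 r y := by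
  unfold tr2
  rw [trF_add]
  rcases trF_mem r hF x with hx | hx <;> rcases trF_mem r hF y with hy | hy <;>
      rw [hx, hy]
  · norm_num
  · norm_num
  · norm_num
  · rw [if_pos (CharTwo.add_self_eq_zero 1), if_neg one_ne_zero]
    decide

theorem card_trF_zero_le (hr : 1 ≤ r) :
    (univ.filter fun x : F => trF r x = 0).card ≤ 2 ^ (r - 1) := by
  classical
  set p : Polynomial F := ∑ i ∈ Finset.range r, Polynomial.X ^ (2 ^ i) with hp
  have heval : ∀ x : F, p.eval x = trF r x := by
    intro x; simp [hp, trF, Polynomial.eval_finset_sum]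
  have hcoeff : p.coeff (2 ^ (r - 1)) = 1 := by
    rw [hp, Polynomial.finset_sum_coeff]
    rw [Finset.sum_eq_single (r - 1)]
    · simp [Polynomial.coeff_X_pow]
    · intro i hi hne
      rw [Polynomial.coeff_X_pow, if_neg]
      exact fun h => hne (Nat.pow_right_injective le_rfl h.symm)
    · intro h; exact absurd (Finset.mem_range.mpr (by omega)) h
  have hp0 : p ≠ 0 := fun h => by simp [h] at hcoeff
  have hdeg : p.natDegree ≤ 2 ^ (r - 1) := by
    apply Polynomial.natDegree_sum_le_of_forall_le
    intro i hi
    rw [Polynomial.natDegree_X_pow]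
    exact Nat.pow_le_pow_right (by norm_num) (by rw [Finset.mem_range] at hi; omega)
  have hsub : (univ.filter fun x : F => trF r x = 0) ⊆ p.roots.toFinset := by
    intro x hx
    rw [Multiset.mem_toFinset, Polynomial.mem_roots']
    exact ⟨hp0, by rw [Polynomial.IsRoot, heval]; exact (Finset.mem_filter.mp hx).2⟩
  calc (univ.filter fun x : F => trF r x = 0).card ≤ p.roots.toFinset.card :=
        Finset.card_le_card hsub
    _ ≤ Multiset.card p.roots := p.roots.toFinset_card_le
    _ ≤ p.natDegree := p.card_roots'
    _ ≤ 2 ^ (r - 1) := hdeg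

theorem sum_theta_split (hF : Fintype.card F = 2 ^ r) (f : F → F) :
    ∑ x ∈ univ.filter (fun x : F => x ≠ 0 ∧ trF r x = 0), f x
      = ∑ x ∈ (univ : Finset F).erase 0, f x
        + ∑ i ∈ Finset.range r, ∑ x ∈ (univ : Finset F).erase 0, x ^ (2 ^ i) * f x := by
  have hset : univ.filter (fun x : F => x ≠ 0 ∧ trF r x = 0)
      = ((univ : Finset F).erase 0).filter (fun x => trF r x = 0) := by
    ext x; simp [and_comm]
  rw [hset, Finset.sum_filter]
  have hterm : ∀ x : F, (if trF r x = 0 then f x else 0) = (1 + trF r x) * f x := by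
    intro x
    rcases trF_mem r hF x with hx | hx
    · rw [if_pos hx, hx]; ring
    · rw [if_neg (by rw [hx]; exact one_ne_zero), hx,
        CharTwo.add_self_eq_zero, zero_mul]
  rw [Finset.sum_congr rfl fun x _ => hterm x]
  have hexp : ∀ x : F, (1 + trF r x) * f x
      = f x + ∑ i ∈ Finset.range r, x ^ (2 ^ i) * f x := by
    intro x
    rw [add_mul, one_mul, trF, Finset.sum_mul]
  rw [Finset.sum_congr rfl fun x _ => hexp x, Finset.sum_add_distrib, Finset.sum_comm]

theorem sum_erase_zero_pow {F : Type*} [Field F] [Fintype F] [DecidableEq F]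
    (k : ℕ) (hk : k ≠ 0) :
    ∑ x ∈ (univ : Finset F).erase 0, x ^ k = ∑ x : F, x ^ k := by
  have h := Finset.add_sum_erase (univ : Finset F) (fun x => x ^ k) (Finset.mem_univ 0)
  rw [zero_pow hk, zero_add] at h
  exact h

theorem sum_theta_inv (hr : 3 ≤ r) (hF : Fintype.card F = 2 ^ r) :
    ∑ x ∈ univ.filter (fun x : F => x ≠ 0 ∧ trF r x = 0), x⁻¹ = 1 := by
  have hq : (7 : ℕ) < Fintype.card F - 1 + 1 := by
    rw [hF]
    have : 2 ^ 3 ≤ 2 ^ r := Nat.pow_le_pow_right (by norm_num) hr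
    omega
  rw [sum_theta_split r hF]
  have h1 : ∑ x ∈ (univ : Finset F).erase 0, x⁻¹ = 0 := by
    rw [Finset.sum_erase _ inv_zero]
    rw [show ∑ x : F, x⁻¹ = ∑ x : F, x from
      Finset.sum_nbij' (fun x => x⁻¹) (fun x => x⁻¹) (fun _ _ => Finset.mem_univ _)
        (fun _ _ => Finset.mem_univ _) (fun x _ => inv_inv x) (fun x _ => inv_inv x)
        (fun x _ => rfl)]
    have := FiniteField.sum_pow_lt_card_sub_one F 1 (by omega)
    simpa using this
  have h2 : ∀ i ∈ Finset.range r,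
      ∑ x ∈ (univ : Finset F).erase 0, x ^ (2 ^ i) * x⁻¹
        = if i = 0 then 1 else 0 := by
    intro i hi
    rw [Finset.mem_range] at hi
    have h2i : (1:ℕ) ≤ 2 ^ i := Nat.one_le_two_pow
    have hsimp : ∀ x ∈ (univ : Finset F).erase 0,
        x ^ (2 ^ i) * x⁻¹ = x ^ (2 ^ i - 1) := by
      intro x hx
      have hx0 : x ≠ 0 := (Finset.mem_erase.mp hx).1
      rw [show x ^ (2 ^ i) = x ^ (2 ^ i - 1) * x by rw [← pow_succ]; congr 1; omega,
        mul_assoc, mul_inv_cancel₀ hx0, mul_one]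
    rw [Finset.sum_congr rfl hsimp]
    rcases Nat.eq_zero_or_pos i with hi0 | hip
    · subst hi0
      rw [if_pos rfl]
      have hone : ∀ x ∈ (univ : Finset F).erase 0, x ^ (2 ^ 0 - 1) = (1 : F) := by
        intro x _; norm_num
      rw [Finset.sum_congr rfl hone]
      rw [Finset.sum_const, Finset.card_erase_of_mem (Finset.mem_univ _), Finset.card_univ,
        nsmul_one, Nat.cast_sub Fintype.card_pos, hF, Nat.cast_pow]
      rw [show ((2:ℕ):F) = 0 from by exact_mod_cast CharP.cast_eq_zero F 2]
      rw [zero_pow (by omega), Nat.cast_one, zero_sub, CharTwo.neg_eq]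
    · rw [if_neg (by omega)]
      have hk1 : (1:ℕ) ≤ 2 ^ i - 1 := by
        have : 2 ^ 1 ≤ 2 ^ i := Nat.pow_le_pow_right (by norm_num) hip
        omega
      rw [sum_erase_zero_pow _ (by omega)]
      apply FiniteField.sum_pow_lt_card_sub_one
      have hlt : 2 ^ i ≤ 2 ^ (r-1) := Nat.pow_le_pow_right (by norm_num) (by omega)
      have h2r : 2 ^ (r-1) * 2 = 2 ^ r := by
        rw [← pow_succ]; congr 1; omega
      rw [hF]
      have hb : (1:ℕ) ≤ 2 ^ (r-1) := Nat.one_le_two_pow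
      omega
  rw [Finset.sum_congr rfl h2, h1, zero_add, Finset.sum_ite_eq' (Finset.range r) 0 (fun _ => 1),
    if_pos (Finset.mem_range.mpr (by omega))]

theorem sum_theta_id (hr : 3 ≤ r) (hF : Fintype.card F = 2 ^ r) :
    ∑ x ∈ univ.filter (fun x : F => x ≠ 0 ∧ trF r x = 0), x = 0 := by
  have hq : (7 : ℕ) < Fintype.card F - 1 + 1 := by
    rw [hF]
    have : 2 ^ 3 ≤ 2 ^ r := Nat.pow_le_pow_right (by norm_num) hr
    omega
  rw [sum_theta_split r hF]
  have h1 : ∑ x ∈ (univ : Finset F).erase 0, x = 0 := by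
    have h := Finset.add_sum_erase (univ : Finset F) (fun x : F => x) (Finset.mem_univ 0)
    simp only [zero_add] at h
    rw [h]
    have := FiniteField.sum_pow_lt_card_sub_one F 1 (by omega)
    simpa using this
  have h2 : ∀ i ∈ Finset.range r,
      ∑ x ∈ (univ : Finset F).erase 0, x ^ (2 ^ i) * x = 0 := by
    intro i hi
    rw [Finset.mem_range] at hi
    have hsimp : ∀ x ∈ (univ : Finset F).erase 0,
        x ^ (2 ^ i) * x = x ^ (2 ^ i + 1) := by
      intro x _; rw [pow_succ]
    rw [Finset.sum_congr rfl hsimp, sum_erase_zero_pow _ (by positivity)]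
    apply FiniteField.sum_pow_lt_card_sub_one
    have hlt : 2 ^ i ≤ 2 ^ (r-1) := Nat.pow_le_pow_right (by norm_num) (by omega)
    have h2r : 2 ^ (r-1) * 2 = 2 ^ r := by
      rw [← pow_succ]; congr 1; omega
    have h8 : 4 ≤ 2 ^ (r-1) := by
      calc (4:ℕ) = 2 ^ 2 := by norm_num
      _ ≤ 2 ^ (r-1) := Nat.pow_le_pow_right (by norm_num) (by omega)
    rw [hF]; omega

  rw [Finset.sum_congr rfl h2, h1, zero_add, Finset.sum_const, smul_zero]

end aux2


/-- For `r ≥ 3`, the map `c_2 : F_q → F_2^(q/2−1)`,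
`a ↦ (tr(a·γ_1⁻¹), …, tr(a·γ_{q/2−1}⁻¹))`,
where `γ_1, …, γ_{q/2−1}` enumerate the nonzero elements of `Θ(F_q) = {α² + α : α ∈ F_q}`,
is an injective `F_2`-linear (additive) map whose image is exactly the dual code `C_2^⊥`;
in particular `C_2^⊥` has exactly `q` elements. -/
theorem c2_injective_additive_range_eq_dual {F : Type*} [Field F] [Fintype F] [DecidableEq F]
    (r : ℕ) (hr : 3 ≤ r) (hF : Fintype.card F = 2 ^ r)
    (γ : Fin (2 ^ (r - 1) - 1) → F) (hγinj : Function.Injective γ)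
    (hγran : Set.range γ = {β : F | β ≠ 0 ∧ ∃ α : F, β = α ^ 2 + α}) :
    Function.Injective (cw r (invVec γ)) ∧
    (∀ a a' : F, cw r (invVec γ) (a + a') = cw r (invVec γ) a + cw r (invVec γ) a') ∧
    Set.range (cw r (invVec γ)) = dualSet (invVec γ) ∧
    Nat.card (dualSet (invVec γ)) = 2 ^ r := by
  haveI hchar : CharP F 2 := charF_two hF
  have hvdef : ∀ l, (invVec γ) l = (γ l)⁻¹ := fun l => rfl
  -- basic facts about γ
  have hγ0 : ∀ l, γ l ≠ 0 ∧ trF r (γ l) = 0 := by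
    intro l
    have hmem : γ l ∈ Set.range γ := ⟨l, rfl⟩
    rw [hγran] at hmem
    obtain ⟨hne, α, hα⟩ := hmem
    refine ⟨hne, ?_⟩
    rw [hα, trF_add r, trF_sq r, trF_self r hF, CharTwo.add_self_eq_zero]
  -- the Theta finset
  set Th : Finset F := univ.filter (fun x : F => x ≠ 0 ∧ trF r x = 0) with hTh
  have hThcard : Th.card ≤ 2 ^ (r - 1) - 1 := by
    have hsub : insert (0:F) Th ⊆ univ.filter (fun x : F => trF r x = 0) := by
      intro x hx
      rcases Finset.mem_insert.mp hx with rfl | hx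
      · exact Finset.mem_filter.mpr ⟨Finset.mem_univ _, trF_zero r⟩
      · exact Finset.mem_filter.mpr ⟨Finset.mem_univ _, (Finset.mem_filter.mp hx).2.2⟩
    have h0 : (0:F) ∉ Th := by
      intro h; exact ((Finset.mem_filter.mp h).2.1) rfl
    have := Finset.card_le_card hsub
    rw [Finset.card_insert_of_notMem h0] at this
    have hb := card_trF_zero_le (F := F) r (by omega)
    have h1 : (1:ℕ) ≤ 2 ^ (r-1) := Nat.one_le_two_pow
    omega
  have himg : Finset.image γ univ = Th := by
    apply Finset.eq_of_subset_of_card_le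
    · intro x hx
      obtain ⟨l, _, rfl⟩ := Finset.mem_image.mp hx
      exact Finset.mem_filter.mpr ⟨Finset.mem_univ _, hγ0 l⟩
    · rw [Finset.card_image_of_injective _ hγinj, Finset.card_univ, Fintype.card_fin]
      exact hThcard
  have hsum_img : ∀ f : F → F, ∑ x ∈ Th, f x = ∑ l, f (γ l) := by
    intro f
    rw [← himg, Finset.sum_image (fun a _ b _ h => hγinj h)]
  have hsum_inv : ∑ l, (γ l)⁻¹ = 1 := by
    rw [← hsum_img fun x => x⁻¹]; exact sum_theta_inv r hr hF
  have hsum_id : ∑ l, γ l = 0 := by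
    rw [← hsum_img (fun x => x)]; exact sum_theta_id r hr hF
  -- additivity
  have hadd : ∀ a a' : F, cw r (invVec γ) (a + a') = cw r (invVec γ) a + cw r (invVec γ) a' := by
    intro a a'
    funext l
    show tr2 r ((a + a') * (invVec γ) l) = tr2 r (a * (invVec γ) l) + tr2 r (a' * (invVec γ) l)
    rw [add_mul, tr2_add r hF]
  -- kernel triviality
  have hker : ∀ b : F, cw r (invVec γ) b = 0 → b = 0 := by
    intro b hb
    by_contra hb0
    let ι : Fin (2 ^ (r - 1) - 1) → F := fun l => b * (γ l)⁻¹
    have hιinj : Function.Injective ι := by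
      intro l l' h
      have h' : b * (γ l)⁻¹ = b * (γ l')⁻¹ := h
      exact hγinj (inv_injective (mul_left_cancel₀ hb0 h'))
    have hιmem : ∀ l, ι l ∈ Th := by
      intro l
      refine Finset.mem_filter.mpr ⟨Finset.mem_univ _, mul_ne_zero hb0 (inv_ne_zero (hγ0 l).1), ?_⟩
      have := congrFun hb l
      exact trF_of_tr2 r this
    have himgι : Finset.image ι univ = Th := by
      apply Finset.eq_of_subset_of_card_le
      · intro x hx
        obtain ⟨l, _, rfl⟩ := Finset.mem_image.mp hx
        exact hιmem l
      · rw [Finset.card_image_of_injective _ hιinj, Finset.card_univ, Fintype.card_fin]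
        exact hThcard
    have : ∑ x ∈ Th, x = ∑ l, ι l := by
      rw [← himgι, Finset.sum_image (fun a _ c _ h => hιinj h)]
    rw [sum_theta_id r hr hF] at this
    have hιs : ∑ l, ι l = b * ∑ l, (γ l)⁻¹ := by
      rw [Finset.mul_sum]
    rw [hιs, hsum_inv, mul_one] at this
    exact hb0 this.symm
  have hinj : Function.Injective (cw r (invVec γ)) := by
    intro a a' h
    have hb : cw r (invVec γ) (a + a') = 0 := by
      rw [hadd a a', h]
      funext l
      exact CharTwo.add_self_eq_zero _
    have := hker _ hb
    have h2 : a - a' = 0 := by rw [CharTwo.sub_eq_add]; exact this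
    exact sub_eq_zero.mp h2
  -- linear algebra setup
  letI : Algebra (ZMod 2) F := ZMod.algebra F 2
  have hz01 : ∀ z : ZMod 2, z = 0 ∨ z = 1 := by decide
  have hsmul : ∀ (z : ZMod 2) (x : F), z • x = ((z.val : ℕ) : F) * x := by
    intro z x
    rw [ZMod.natCast_val]
    rfl
  let φ : (Fin (2 ^ (r - 1) - 1) → ZMod 2) →ₗ[ZMod 2] F :=
    { toFun := fun u => ∑ l, u l • (invVec γ) l
      map_add' := by
        intro u u'
        simp only [Pi.add_apply, add_smul]
        rw [Finset.sum_add_distrib]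
      map_smul' := by
        intro c u
        simp only [Pi.smul_apply, smul_eq_mul, RingHom.id_apply]
        rw [Finset.smul_sum]
        refine Finset.sum_congr rfl fun l _ => ?_
        rcases hz01 c with rfl | rfl
        · rw [zero_mul, zero_smul, zero_smul]
        · rw [one_mul, one_smul] }
  have hφapp : ∀ u, φ u = ∑ l, u l • (invVec γ) l := fun u => rfl
  have hbridge : ∀ u : Fin (2 ^ (r - 1) - 1) → ZMod 2, (∑ l, ((u l).val : ℕ) • (invVec γ) l) = φ u := by
    intro u
    rw [hφapp]
    exact Finset.sum_congr rfl fun l _ => by rw [nsmul_eq_mul, ← hsmul]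
  have hcode : ∀ u : Fin (2 ^ (r - 1) - 1) → ZMod 2, u ∈ codeSet (invVec γ) ↔ φ u = 0 := by
    intro u
    rw [← hbridge]
    exact Iff.rfl
  have hφsingle : ∀ l, φ (Pi.single l (1 : ZMod 2)) = (invVec γ) l := by
    intro l
    rw [hφapp, Finset.sum_eq_single l]
    · rw [Pi.single_eq_same, one_smul]
    · intro k _ hk
      rw [Pi.single_eq_of_ne hk, zero_smul]
    · intro h; exact absurd (Finset.mem_univ l) h
  let T : F →ₗ[ZMod 2] Module.Dual (ZMod 2) F :=
    { toFun := fun a =>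
        { toFun := fun x => tr2 r (a * x)
          map_add' := fun x y => by
            show tr2 r (a * (x + y)) = tr2 r (a * x) + tr2 r (a * y)
            rw [mul_add, tr2_add r hF]
          map_smul' := fun c x => by
            show tr2 r (a * (c • x)) = c * tr2 r (a * x)
            rcases hz01 c with rfl | rfl
            · rw [zero_smul, mul_zero, zero_mul]
              exact tr2_zero r
            · rw [one_smul, one_mul] }
      map_add' := fun a a' => by
        ext x
        show tr2 r ((a + a') * x) = tr2 r (a * x) + tr2 r (a' * x)
        rw [add_mul, tr2_add r hF]
      map_smul' := fun c a => by
        ext x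
        rcases hz01 c with rfl | rfl
        · show tr2 r (((0 : ZMod 2) • a) * x) = (0 : ZMod 2) * tr2 r (a * x)
          rw [zero_smul, zero_mul, zero_mul]
          exact tr2_zero r
        · show tr2 r (((1 : ZMod 2) • a) * x) = (1 : ZMod 2) * tr2 r (a * x)
          rw [one_smul, one_mul] }
  have hTapp : ∀ (a x : F), T a x = tr2 r (a * x) := fun a x => rfl
  haveI : Module.Finite (ZMod 2) F := Module.Finite.of_finite
  have hrank : Module.finrank (ZMod 2) F = r := by
    have hcard := Module.card_eq_pow_finrank (K := ZMod 2) (V := F)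
    rw [ZMod.card, hF] at hcard
    exact (Nat.pow_right_injective le_rfl hcard.symm)
  have hT0 : ∀ b : F, (∀ x, tr2 r (b * x) = 0) → b = 0 := by
    intro b hb
    by_contra hb0
    have hall : ∀ y : F, trF r y = 0 := by
      intro y
      have := trF_of_tr2 r (hb (b⁻¹ * y))
      rwa [← mul_assoc, mul_inv_cancel₀ hb0, one_mul] at this
    have : (univ.filter fun x : F => trF r x = 0) = univ := by
      apply Finset.filter_true_of_mem
      intro x _; exact hall x
    have hcard := card_trF_zero_le (F := F) r (by omega)
    rw [this, Finset.card_univ, hF] at hcard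
    have h2r : 2 ^ (r-1) * 2 = 2 ^ r := by rw [← pow_succ]; congr 1; omega
    have h1 : (1:ℕ) ≤ 2 ^ (r-1) := Nat.one_le_two_pow
    omega
  have hTinj : Function.Injective T := by
    intro a a' h
    have hz : ∀ x, tr2 r ((a + a') * x) = 0 := by
      intro x
      rw [add_mul, tr2_add r hF]
      have : T a x = T a' x := by rw [h]
      rw [hTapp, hTapp] at this
      rw [this]
      exact CharTwo.add_self_eq_zero _
    have := hT0 _ hz
    have h2 : a - a' = 0 := by rw [CharTwo.sub_eq_add]; exact this
    exact sub_eq_zero.mp h2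
  haveI : Finite (Module.Dual (ZMod 2) F) :=
    Finite.of_injective (fun f : Module.Dual (ZMod 2) F => (f : F → ZMod 2))
      DFunLike.coe_injective
  have hTsurj : Function.Surjective T := by
    haveI := Fintype.ofFinite (Module.Dual (ZMod 2) F)
    have hcardD : Fintype.card (Module.Dual (ZMod 2) F) = 2 ^ r := by
      have hcard := Module.card_eq_pow_finrank (K := ZMod 2)
        (V := Module.Dual (ZMod 2) F)
      rw [ZMod.card, Subspace.dual_finrank_eq, hrank] at hcard
      exact hcard
    have hbij : Function.Bijective T := by
      refine (Nat.bijective_iff_injective_and_card T).mpr ⟨hTinj, ?_⟩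
      rw [Nat.card_eq_fintype_card, Nat.card_eq_fintype_card, hcardD, hF]
    exact hbij.surjective
  -- φ surjective
  have hφsurj : Function.Surjective φ := by
    rw [← LinearMap.range_eq_top]
    by_contra hne
    obtain ⟨ψ, hψ0, hψker⟩ :=
      (LinearMap.range φ).exists_le_ker_of_lt_top (lt_top_iff_ne_top.mpr hne)
    obtain ⟨a, rfl⟩ := hTsurj ψ
    have ha0 : a ≠ 0 := by
      rintro rfl
      apply hψ0
      ext x
      show tr2 r (0 * x) = 0
      rw [zero_mul]; exact tr2_zero r
    apply ha0
    apply hker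
    funext l
    show tr2 r (a * (invVec γ) l) = 0
    have hmem : (invVec γ) l ∈ LinearMap.range φ := ⟨Pi.single l 1, hφsingle l⟩
    have := hψker hmem
    rwa [LinearMap.mem_ker, hTapp] at this
  -- dual ⊆ range
  have hdual_sub : dualSet (invVec γ) ⊆ Set.range (cw r (invVec γ)) := by
    intro w hw
    let W : (Fin (2 ^ (r - 1) - 1) → ZMod 2) →ₗ[ZMod 2] ZMod 2 :=
      { toFun := fun u => ∑ l, w l * u l
        map_add' := by
          intro u u'
          simp only [Pi.add_apply, mul_add]
          rw [Finset.sum_add_distrib]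
        map_smul' := by
          intro c u
          simp only [Pi.smul_apply, smul_eq_mul, RingHom.id_apply]
          rw [Finset.mul_sum]
          exact Finset.sum_congr rfl fun l _ => by ring }
    have hWapp : ∀ u, W u = ∑ l, w l * u l := fun _ => rfl
    have hkerle : ∀ u, φ u = 0 → W u = 0 := by
      intro u hu
      exact hw u ((hcode u).mpr hu)
    obtain ⟨g, hg⟩ := φ.exists_rightInverse_of_surjective (LinearMap.range_eq_top.mpr hφsurj)
    obtain ⟨a, ha⟩ := hTsurj (W.comp g)
    refine ⟨a, ?_⟩
    funext l
    show tr2 r (a * (invVec γ) l) = w l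
    have h1 : tr2 r (a * (invVec γ) l) = W (g ((invVec γ) l)) := by
      rw [← hTapp, ha]
      rfl
    have h2 : φ (g ((invVec γ) l) - Pi.single l 1) = 0 := by
      rw [map_sub, hφsingle l]
      have := LinearMap.congr_fun hg ((invVec γ) l)
      rw [LinearMap.comp_apply, LinearMap.id_apply] at this
      rw [this, sub_self]
    have h3 : W (g ((invVec γ) l)) = W (Pi.single l 1) := by
      have := hkerle _ h2
      rw [map_sub] at this
      exact sub_eq_zero.mp this
    have h4 : W (Pi.single l (1 : ZMod 2)) = w l := by
      rw [hWapp, Finset.sum_eq_single l]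
      · rw [Pi.single_eq_same, mul_one]
      · intro k _ hk
        rw [Pi.single_eq_of_ne hk, mul_zero]
      · intro h; exact absurd (Finset.mem_univ l) h
    rw [h1, h3, h4]
  -- range ⊆ dual
  have hsub2 : Set.range (cw r (invVec γ)) ⊆ dualSet (invVec γ) := by
    rintro _ ⟨a, rfl⟩ u hu
    have hu' : ∑ l, ((u l).val : ℕ) • (invVec γ) l = 0 := hu
    let τ : F →+ ZMod 2 := AddMonoidHom.mk' (tr2 r) (tr2_add r hF)
    have hτ : ∀ x : F, τ x = tr2 r x := fun _ => rfl
    have hterm : ∀ l, cw r (invVec γ) a l * u l = τ (((u l).val : ℕ) • (a * (invVec γ) l)) := by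
      intro l
      rcases hz01 (u l) with h | h <;> rw [h]
      · rw [ZMod.val_zero, zero_smul, hτ, mul_zero]
        exact (tr2_zero r).symm
      · rw [ZMod.val_one, one_smul, hτ, mul_one]
        rfl
    rw [Finset.sum_congr rfl fun l _ => hterm l, ← map_sum]
    have hfac : (∑ l, ((u l).val : ℕ) • (a * (invVec γ) l)) = a * ∑ l, ((u l).val : ℕ) • (invVec γ) l := by
      rw [Finset.mul_sum]
      exact Finset.sum_congr rfl fun l _ => (mul_smul_comm _ _ _).symm
    rw [hfac, hu', mul_zero]
    exact map_zero τ
  have hrange : Set.range (cw r (invVec γ)) = dualSet (invVec γ) := Set.Subset.antisymm hsub2 hdual_sub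
  refine ⟨hinj, hadd, hrange, ?_⟩
  rw [← hrange, Nat.card_range_of_injective hinj, Nat.card_eq_fintype_card, hF]
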